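/- arXiv:0906.2017 — 2 statements merged into one kernel-verified Lean document; each statement's English description precedes it below -/
import Mathlib

section
/- Let (A, φ) be a noncommutative probability space and let A_1, ..., A_k be unital subalgebras of A which are free in (A, φ). Let F' denote the set of all linear functionals φ' : A → ℂ such that φ'(1) = 0 and A_1, ..., A_k are infinitesimally free in (A, φ, φ'). Then: (1) F' is a linear subspace of the dual space of A (it contains the zero functional and is closed under addition and multiplication by complex scalars); (2) if in addition A is generated as a unital algebra by A_1 ∪ ⋯ ∪ A_k, then the map from F' to the product of the duals of A_1, ..., A_k sending φ' to (φ'|A_1, ..., φ'|A_k) is injective. -/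
/-!
Both clauses of infinitesimal freeness are linear in `φ'` once `φ` is fixed, so soul companions
form a subspace; the zero functional is one exactly because the `A_i` are free.

If the `A_i` generate `A`, then `A` is spanned by alternating products `a₁ ⋯ aₙ` of `φ`-centred
elements (the empty product being `1`): this span contains `1` and is stable under left
multiplication by every `A_j`. Indeed a centred `a ∈ A_j` either extends such a word or merges
with its first letter `b ∈ A_j`, and `a b = (a b - φ(a b)) + φ(a b)` leaves a word of the same
length plus a multiple of a shorter one. On an alternating centred word a soul companion is
either `0` or a product of values of `φ` times its value on the middle letter, so it is
determined by its restrictions to the `A_i`.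
-/

namespace InfFree

open scoped BigOperators

/-- `π` is a partition of `Fin n` into nonempty blocks. -/
def IsPartition {n : ℕ} (π : Finset (Finset (Fin n))) : Prop :=
  (∀ V ∈ π, V.Nonempty) ∧ ∀ i : Fin n, ∃! V : Finset (Fin n), V ∈ π ∧ i ∈ V

/-- `π` is non-crossing: there are no `p < q < r < s` with `p, r` in one block and
`q, s` in another block. -/
def IsNonCrossing {n : ℕ} (π : Finset (Finset (Fin n))) : Prop :=
  ∀ p q r s : Fin n, p < q → q < r → r < s →
    ∀ V ∈ π, ∀ W ∈ π, p ∈ V → r ∈ V → q ∈ W → s ∈ W → V = W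

open Classical in
/-- The finset `NC n` of non-crossing partitions of `Fin n`. -/
noncomputable def NC (n : ℕ) : Finset (Finset (Finset (Fin n))) :=
  Finset.univ.filter fun π => IsPartition π ∧ IsNonCrossing π

/-- Restriction of an `n`-tuple to a subset `V ⊆ Fin n`, listed in increasing order. -/
def restrict {α : Type*} {n : ℕ} (a : Fin n → α) (V : Finset (Fin n)) :
    Fin V.card → α :=
  fun i => a (V.orderIsoOfFin rfl i).1

/-- `κ` is the family of `R`-valued non-crossing cumulant functionals of `φ`, i.e.
the moment-cumulant formulas hold. -/
def MomentCumulant {A : Type*} [Ring A] {R : Type*} [CommRing R]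
    (φ : A → R) (κ : ∀ n : ℕ, (Fin n → A) → R) : Prop :=
  ∀ (n : ℕ), 1 ≤ n → ∀ a : Fin n → A,
    φ (List.ofFn a).prod = ∑ π ∈ NC n, ∏ V ∈ π, κ V.card (restrict a V)

/-- `κ'` is the family of infinitesimal non-crossing cumulant functionals of
`(φ, φ')`, where `κ` is the family of non-crossing cumulant functionals of `φ`. -/
def InfMomentCumulant {A : Type*} [Ring A]
    (φ' : A → ℂ) (κ κ' : ∀ n : ℕ, (Fin n → A) → ℂ) : Prop :=
  ∀ (n : ℕ), 1 ≤ n → ∀ a : Fin n → A,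
    φ' (List.ofFn a).prod =
      ∑ π ∈ NC n, ∑ V ∈ π,
        κ' V.card (restrict a V) * ∏ W ∈ π.erase V, κ W.card (restrict a W)

/-- Consecutive indices are distinct. -/
def Alternating {n k : ℕ} (i : Fin n → Fin k) : Prop :=
  ∀ (m : ℕ) (h : m + 1 < n), i ⟨m, Nat.lt_of_succ_lt h⟩ ≠ i ⟨m + 1, h⟩

/-- Freeness of the family of subsets `S` with respect to `φ`. -/
def FreeSets {A : Type*} [Ring A] {k : ℕ} (φ : A → ℂ) (S : Fin k → Set A) : Prop :=
  ∀ (n : ℕ), 1 ≤ n → ∀ i : Fin n → Fin k, Alternating i →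
    ∀ a : Fin n → A, (∀ m, a m ∈ S (i m)) → (∀ m, φ (a m) = 0) →
      φ (List.ofFn a).prod = 0

/-- Infinitesimal freeness of the family of subsets `S` with respect to `(φ, φ')`. -/
def InfFreeSets {A : Type*} [Ring A] {k : ℕ} (φ φ' : A → ℂ) (S : Fin k → Set A) : Prop :=
  ∀ (n : ℕ) (hn : 1 ≤ n) (i : Fin n → Fin k), Alternating i →
    ∀ a : Fin n → A, (∀ m, a m ∈ S (i m)) → (∀ m, φ (a m) = 0) →
      φ (List.ofFn a).prod = 0 ∧
      ((Odd n ∧ ∀ m : Fin n, i m = i m.rev) →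
        φ' (List.ofFn a).prod =
          (∏ j : Fin ((n - 1) / 2),
              φ (a ⟨j, by have := j.isLt; omega⟩ *
                 a ⟨n - 1 - j, by have := j.isLt; omega⟩)) *
            φ' (a ⟨n / 2, by omega⟩)) ∧
      (¬(Odd n ∧ ∀ m : Fin n, i m = i m.rev) → φ' (List.ofFn a).prod = 0)

/-- The set of soul companions for `φ` with respect to the subalgebras `Alg i`. -/
def soulCompanions {A : Type*} [Ring A] [Algebra ℂ A]
    (φ : A → ℂ) {k : ℕ} (Alg : Fin k → Subalgebra ℂ A) : Set (A →ₗ[ℂ] ℂ) :=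
  {ψ | ψ 1 = 0 ∧ InfFreeSets φ (⇑ψ) (fun i => (Alg i : Set A))}


section LeftMultiplication

variable {R A : Type*} [CommSemiring R] [Semiring A] [Algebra R A]

theorem _root_.Submodule.eq_top_of_one_mem_of_mul_mem {s : Set A}
    (hs : Algebra.adjoin R s = ⊤) (M : Submodule R A) (h1 : (1 : A) ∈ M)
    (hmul : ∀ x ∈ s, ∀ y ∈ M, x * y ∈ M) : M = ⊤ := by
  have hstab : ∀ x ∈ Algebra.adjoin R s, ∀ y ∈ M, x * y ∈ M := by
    intro x hx
    induction hx using Algebra.adjoin_induction with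
    | mem x hx => exact hmul x hx
    | algebraMap r =>
      exact fun y hy => by simpa [Algebra.algebraMap_eq_smul_one] using M.smul_mem r hy
    | add x z _ _ hx hz =>
      exact fun y hy => by simpa [add_mul] using M.add_mem (hx y hy) (hz y hy)
    | mul x z _ _ hx hz => exact fun y hy => by simpa [mul_assoc] using hx _ (hz y hy)
  refine eq_top_iff.2 fun x _ => ?_
  simpa using hstab x (hs ▸ Algebra.mem_top) 1 h1

end LeftMultiplication

theorem Alternating.tail {n k : ℕ} {i : Fin (n + 1) → Fin k} (hi : Alternating i) :
    Alternating (Fin.tail i) :=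
  fun m h => hi (m + 1) (by omega)

theorem Alternating.cons {n k : ℕ} {j : Fin k} {i : Fin (n + 1) → Fin k} (hj : j ≠ i 0)
    (hi : Alternating i) : Alternating (Fin.cons j i : Fin (n + 2) → Fin k) := by
  rintro (_ | m) h
  · exact hj
  · exact hi m (by omega)

section Words

variable {A : Type*} [Ring A] {k : ℕ}

def alternatingCenteredProducts (φ : A → ℂ) (S : Fin k → Set A) : Set A :=
  {x | ∃ (n : ℕ) (i : Fin n → Fin k) (a : Fin n → A), Alternating i ∧
    (∀ m, a m ∈ S (i m)) ∧ (∀ m, φ (a m) = 0) ∧ x = (List.ofFn a).prod}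

theorem one_mem_alternatingCenteredProducts (φ : A → ℂ) (S : Fin k → Set A) :
    (1 : A) ∈ alternatingCenteredProducts φ S :=
  ⟨0, Fin.elim0, Fin.elim0, fun m h => by omega, fun m => m.elim0, fun m => m.elim0, rfl⟩

theorem InfFreeSets.add {φ f g : A → ℂ} {S : Fin k → Set A} (hf : InfFreeSets φ f S)
    (hg : InfFreeSets φ g S) : InfFreeSets φ (f + g) S := by
  intro n hn i hi a haS ha
  obtain ⟨hφ, hf_odd, hf_even⟩ := hf n hn i hi a haS ha
  obtain ⟨-, hg_odd, hg_even⟩ := hg n hn i hi a haS ha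
  refine ⟨hφ, fun h => ?_, fun h => ?_⟩
  · simp only [Pi.add_apply, hf_odd h, hg_odd h, mul_add]
  · simp only [Pi.add_apply, hf_even h, hg_even h, add_zero]

theorem InfFreeSets.smul {φ f : A → ℂ} {S : Fin k → Set A} (c : ℂ) (hf : InfFreeSets φ f S) :
    InfFreeSets φ (c • f) S := by
  intro n hn i hi a haS ha
  obtain ⟨hφ, hf_odd, hf_even⟩ := hf n hn i hi a haS ha
  refine ⟨hφ, fun h => ?_, fun h => ?_⟩
  · simp only [Pi.smul_apply, hf_odd h, smul_eq_mul, mul_left_comm]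
  · simp only [Pi.smul_apply, hf_even h, smul_zero]

theorem FreeSets.infFreeSets_zero {φ : A → ℂ} {S : Fin k → Set A} (hfree : FreeSets φ S) :
    InfFreeSets φ 0 S :=
  fun n hn i hi a haS ha => ⟨hfree n hn i hi a haS ha, fun _ => by simp, fun _ => rfl⟩

theorem InfFreeSets.eqOn_alternatingCenteredProducts {φ f g : A → ℂ} {S : Fin k → Set A}
    (hf : InfFreeSets φ f S) (hg : InfFreeSets φ g S) (h1 : f 1 = g 1)
    (hS : ∀ j, Set.EqOn f g (S j)) : Set.EqOn f g (alternatingCenteredProducts φ S) := by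
  rintro _ ⟨_ | n, i, a, hi, haS, ha, rfl⟩
  · exact h1
  obtain ⟨-, hf_odd, hf_even⟩ := hf (n + 1) (by omega) i hi a haS ha
  obtain ⟨-, hg_odd, hg_even⟩ := hg (n + 1) (by omega) i hi a haS ha
  by_cases h : Odd (n + 1) ∧ ∀ m, i m = i m.rev
  · rw [hf_odd h, hg_odd h, hS _ (haS _)]
  · rw [hf_even h, hg_even h]

end Words

section Generation

variable {A : Type*} [Ring A] [Algebra ℂ A] {k : ℕ} {φ : A →ₗ[ℂ] ℂ}
  {Alg : Fin k → Subalgebra ℂ A}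

theorem centered_mul_mem_span_alternatingCenteredProducts (hφ1 : φ 1 = 1) {j : Fin k} {a : A}
    (ha : a ∈ Alg j) (hφa : φ a = 0) {x : A}
    (hx : x ∈ alternatingCenteredProducts φ fun i => (Alg i : Set A)) :
    a * x ∈ Submodule.span ℂ (alternatingCenteredProducts φ fun i => (Alg i : Set A)) := by
  obtain ⟨n, i, b, hi, hbS, hb, rfl⟩ := hx
  have extend (hj : ∀ h : 0 < n, j ≠ i ⟨0, h⟩) :
      a * (List.ofFn b).prod ∈ alternatingCenteredProducts φ fun i => (Alg i : Set A) := by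
    refine ⟨n + 1, Fin.cons j i, Fin.cons a b, ?_, Fin.cases ha hbS, Fin.cases hφa hb, by simp⟩
    rcases n with _ | n
    · exact fun m h => by omega
    · exact hi.cons (hj (by omega))
  by_cases hj : ∀ h : 0 < n, j ≠ i ⟨0, h⟩
  · exact Submodule.subset_span (extend hj)
  push Not at hj
  obtain ⟨hn, rfl⟩ := hj
  rcases n with _ | n
  · omega
  set r := φ (a * b 0)
  set c := a * b 0 - r • 1
  have hc : c ∈ Alg (i 0) := sub_mem (mul_mem ha (hbS 0)) (Subalgebra.smul_mem _ (one_mem _) r)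
  have hφc : φ c = 0 := by simp [c, r, hφ1]
  have merged : c * (List.ofFn (Fin.tail b)).prod ∈
      alternatingCenteredProducts φ fun i => (Alg i : Set A) :=
    ⟨n + 1, i, Fin.cons c (Fin.tail b), hi, Fin.cases hc fun m => hbS m.succ,
      Fin.cases hφc fun m => hb m.succ, by simp⟩
  have shorter : (List.ofFn (Fin.tail b)).prod ∈
      alternatingCenteredProducts φ fun i => (Alg i : Set A) :=
    ⟨n, Fin.tail i, Fin.tail b, hi.tail, fun m => hbS m.succ, fun m => hb m.succ, rfl⟩
  have hsplit : a * (List.ofFn b).prod =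
      c * (List.ofFn (Fin.tail b)).prod + r • (List.ofFn (Fin.tail b)).prod := by
    rw [List.ofFn_succ, List.prod_cons, ← mul_assoc]
    simp only [c, sub_mul, smul_mul_assoc, one_mul, sub_add_cancel]
    rfl
  rw [hsplit]
  exact add_mem (Submodule.subset_span merged)
    (Submodule.smul_mem _ r (Submodule.subset_span shorter))

theorem span_alternatingCenteredProducts_eq_top (hφ1 : φ 1 = 1)
    (hgen : Algebra.adjoin ℂ (⋃ i, (Alg i : Set A)) = ⊤) :
    Submodule.span ℂ (alternatingCenteredProducts φ fun i => (Alg i : Set A)) = ⊤ := by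
  set M := Submodule.span ℂ (alternatingCenteredProducts φ fun i => (Alg i : Set A))
  refine M.eq_top_of_one_mem_of_mul_mem hgen
    (Submodule.subset_span (one_mem_alternatingCenteredProducts _ _)) fun a ha y hy => ?_
  obtain ⟨j, ha⟩ := Set.mem_iUnion.1 ha
  have hcentered : a - φ a • 1 ∈ Alg j := sub_mem ha (Subalgebra.smul_mem _ (one_mem _) _)
  have hmul : M ≤ M.comap (LinearMap.mulLeft ℂ (a - φ a • 1)) :=
    Submodule.span_le.2 fun x hx =>
      centered_mul_mem_span_alternatingCenteredProducts hφ1 hcentered (by simp [hφ1]) hx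
  have hsplit : a * y = (a - φ a • 1) * y + φ a • y := by
    rw [sub_mul, smul_mul_assoc, one_mul, sub_add_cancel]
  rw [hsplit]
  exact add_mem (hmul hy) (M.smul_mem _ hy)

end Generation

def soulCompanionsSubmodule {A : Type*} [Ring A] [Algebra ℂ A] {φ : A → ℂ} {k : ℕ}
    {Alg : Fin k → Subalgebra ℂ A} (hfree : FreeSets φ fun i => (Alg i : Set A)) :
    Submodule ℂ (A →ₗ[ℂ] ℂ) where
  carrier := soulCompanions φ Alg
  zero_mem' := ⟨rfl, hfree.infFreeSets_zero⟩
  add_mem' := fun ⟨hf1, hf⟩ ⟨hg1, hg⟩ => ⟨by simp [hf1, hg1], hf.add hg⟩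
  smul_mem' := fun c _ ⟨hf1, hf⟩ => ⟨by simp [hf1], hf.smul c⟩

/-- (1) The set of soul companions of `φ` is a linear subspace of
the dual of `A`; (2) if `A` is generated by `A_1 ∪ ⋯ ∪ A_k`, then a soul companion
is determined by its restrictions to `A_1, …, A_k`. -/
theorem soulCompanions_subspace_and_injective_restriction
    {A : Type*} [Ring A] [Algebra ℂ A]
    (φ : A →ₗ[ℂ] ℂ) (hφ1 : φ 1 = 1)
    {k : ℕ} (Alg : Fin k → Subalgebra ℂ A)
    (hfree : FreeSets (⇑φ) (fun i => (Alg i : Set A))) :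
    ((0 : A →ₗ[ℂ] ℂ) ∈ soulCompanions (⇑φ) Alg ∧
      (∀ f ∈ soulCompanions (⇑φ) Alg, ∀ g ∈ soulCompanions (⇑φ) Alg,
        f + g ∈ soulCompanions (⇑φ) Alg) ∧
      (∀ (c : ℂ), ∀ f ∈ soulCompanions (⇑φ) Alg,
        c • f ∈ soulCompanions (⇑φ) Alg)) ∧
    (Algebra.adjoin ℂ (⋃ i, (Alg i : Set A)) = ⊤ →
      ∀ f ∈ soulCompanions (⇑φ) Alg, ∀ g ∈ soulCompanions (⇑φ) Alg,
        (∀ i : Fin k, ∀ a ∈ Alg i, f a = g a) → f = g) := by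
  refine ⟨⟨(soulCompanionsSubmodule hfree).zero_mem, fun f hf g hg =>
    (soulCompanionsSubmodule hfree).add_mem hf hg, fun c f hf =>
    (soulCompanionsSubmodule hfree).smul_mem c hf⟩, ?_⟩
  rintro hgen f ⟨hf1, hf⟩ g ⟨hg1, hg⟩ hrestr
  exact LinearMap.ext_on (span_alternatingCenteredProducts_eq_top hφ1 hgen)
    (hf.eqOn_alternatingCenteredProducts hg (hf1.trans hg1.symm) fun i a ha => hrestr i a ha)

end InfFree
end

section
/- Let (A, μ, μ') be an infinitesimal noncommutative probability space and let A_1, ..., A_k be unital subalgebras of A. Then the following are equivalent: (1) A_1, ..., A_k are infinitesimally free in (A, μ, μ'); (2) A_1, ..., A_k are free in (A, μ), and for every n ≥ 1, every i_1, ..., i_n ∈ {1, ..., k} with i_1 ≠ i_2, ..., i_{n−1} ≠ i_n, and every q_1 ∈ A_{i_1}, ..., q_n ∈ A_{i_n} with μ(q_1) = ⋯ = μ(q_n) = 0, one has μ'(q_1 ⋯ q_n) = Σ_{m=1}^{n} μ(q_1 ⋯ q_{m−1} q_{m+1} ⋯ q_n) · μ'(q_m), where for n = 1 the product q_1 ⋯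 q_0 q_2 ⋯ q_1 with the factor q_1 omitted is understood to be 1_A. -/
namespace InfFree

open scoped BigOperators

section BS
variable {A : Type*} [Ring A] [Algebra ℂ A] {k : ℕ}

lemma free_list (μ : A →ₗ[ℂ] ℂ) (Alg : Fin k → Subalgebra ℂ A)
    (F : FreeSets (⇑μ) (fun i => (Alg i : Set A)))
    (I : List (Fin k)) (L : List A) (hlen : L.length = I.length) (hne : 0 < L.length)
    (hchain : ∀ j (h : j + 1 < I.length), I[j] ≠ I[j + 1])
    (hmem : ∀ j (h : j < L.length), L[j] ∈ Alg (I[j]'(hlen ▸ h)))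
    (hcent : ∀ j (h : j < L.length), μ L[j] = 0) :
    μ L.prod = 0 := by
  have hn : 1 ≤ L.length := hne
  let i : Fin L.length → Fin k := fun j => I[j.1]'(hlen ▸ j.2)
  let a : Fin L.length → A := fun j => L[j.1]
  have hL : List.ofFn a = L := by
    apply List.ext_getElem (by simp)
    intro j h1 h2
    simp [a]
  have halt : Alternating i := fun m h => hchain m (hlen ▸ h)
  have := F L.length hn i halt a (fun m => hmem m.1 m.2) (fun m => hcent m.1 m.2)
  rwa [hL] at this

lemma getElem_td {α : Type*} {n : ℕ} (f : Fin n → α) (a b : ℕ) (ha : a ≤ n) (j : ℕ)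
    (h : j < ((List.ofFn f).take a ++ (List.ofFn f).drop b).length) :
    ((List.ofFn f).take a ++ (List.ofFn f).drop b)[j] =
      if hj : j < a then f ⟨j, by omega⟩
      else f ⟨b + (j - a), by
        simp only [List.length_append, List.length_take, List.length_ofFn,
          List.length_drop] at h
        omega⟩ := by
  have hlt : (List.take a (List.ofFn f)).length = a := by simp [ha]
  rw [List.getElem_append]
  by_cases hj : j < a
  · rw [dif_pos (show j < (List.take a (List.ofFn f)).length by rw [hlt]; exact hj),
      dif_pos hj, List.getElem_take, List.getElem_ofFn]
  · rw [dif_neg (show ¬ j < (List.take a (List.ofFn f)).length by rw [hlt]; exact hj),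
      dif_neg hj, List.getElem_drop, List.getElem_ofFn]
    congr 1
    exact Fin.ext (by simp [hlt])

lemma getElem_tcd {α : Type*} {n : ℕ} (f : Fin n → α) (a b : ℕ) (ha : a ≤ n) (c : α) (j : ℕ)
    (h : j < ((List.ofFn f).take a ++ c :: (List.ofFn f).drop b).length) :
    ((List.ofFn f).take a ++ c :: (List.ofFn f).drop b)[j] =
      if hj : j < a then f ⟨j, by omega⟩
      else if hj' : j = a then c
      else f ⟨b + (j - a - 1), by
        simp only [List.length_append, List.length_take, List.length_ofFn,
          List.length_cons, List.length_drop] at h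
        omega⟩ := by
  have hlt : (List.take a (List.ofFn f)).length = a := by simp [ha]
  rw [List.getElem_append]
  by_cases hj : j < a
  · rw [dif_pos (show j < (List.take a (List.ofFn f)).length by rw [hlt]; exact hj),
      dif_pos hj, List.getElem_take, List.getElem_ofFn]
  · rw [dif_neg (show ¬ j < (List.take a (List.ofFn f)).length by rw [hlt]; exact hj),
      dif_neg hj]
    by_cases hj' : j = a
    · rw [dif_pos hj']
      simp only [hlt, hj', Nat.sub_self, List.getElem_cons_zero]
    · rw [dif_neg hj']
      have h1 : j - (List.take a (List.ofFn f)).length = (j - a - 1) + 1 := by omega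
      simp only [h1, List.getElem_cons_succ, List.getElem_drop, List.getElem_ofFn]

end BS

section BS2
variable {A : Type*} [Ring A] [Algebra ℂ A] {k : ℕ}

noncomputable def pairG {n : ℕ} (μ : A →ₗ[ℂ] ℂ) (q : Fin n → A) (j : ℕ) : ℂ :=
  if h : j < n ∧ n - 1 - j < n then μ (q ⟨j, h.1⟩ * q ⟨n - 1 - j, h.2⟩) else 0

open Classical in
lemma key (μ : A →ₗ[ℂ] ℂ) (hμ1 : μ 1 = 1) (Alg : Fin k → Subalgebra ℂ A)
    (F : FreeSets (⇑μ) (fun i => (Alg i : Set A)))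
    {n : ℕ} (i : Fin n → Fin k) (hi : Alternating i) (q : Fin n → A)
    (hq : ∀ m, q m ∈ Alg (i m)) (h0 : ∀ m, μ (q m) = 0) :
    ∀ (l r : ℕ), l < r → r ≤ n →
      μ (((List.ofFn q).take l ++ (List.ofFn q).drop r).prod) =
        if (l + r = n ∧ ∀ j (_ : j < l) (hjn : j < n) (hjn' : n - 1 - j < n),
              i ⟨j, hjn⟩ = i ⟨n - 1 - j, hjn'⟩) then
          ∏ j ∈ Finset.range l, pairG μ q j
        else 0 := by
  intro l
  induction l with
  | zero =>
    intro r hlr hrn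
    simp only [List.take_zero, List.nil_append]
    by_cases hr : r = n
    · have hd : (List.ofFn q).drop r = [] := by simp [hr]
      rw [hd, if_pos ⟨by omega, fun j hj => absurd hj (Nat.not_lt_zero j)⟩]
      simp [hμ1]
    · have hrn' : r < n := lt_of_le_of_ne hrn hr
      rw [if_neg (by rintro ⟨h1, -⟩; omega)]
      refine free_list μ Alg F ((List.ofFn i).drop r) _ ?_ ?_ ?_ ?_ ?_
      · simp
      · simp; omega
      · intro j hj
        simp only [List.length_drop, List.length_ofFn] at hj
        simp only [List.getElem_drop, List.getElem_ofFn]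
        exact hi (r + j) (by omega)
      · intro j hj
        simp only [List.length_drop, List.length_ofFn] at hj
        simp only [List.getElem_drop, List.getElem_ofFn]
        exact hq _
      · intro j hj
        simp only [List.length_drop, List.length_ofFn] at hj
        simp only [List.getElem_drop, List.getElem_ofFn]
        exact h0 _
  | succ l IH =>
    intro r hlr hrn
    have hln : l < n := by omega
    have hadj : ∀ (x y : ℕ) (hx : x < n) (hy : y < n), x + 1 = y → i ⟨x, hx⟩ ≠ i ⟨y, hy⟩ := by
      intro x y hx hy hxy
      subst hxy
      exact hi x hy
    by_cases hr : r = n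
    · have hd : (List.ofFn q).drop r = [] := by simp [hr]
      rw [hd, List.append_nil, if_neg (by rintro ⟨h1, -⟩; omega)]
      refine free_list μ Alg F ((List.ofFn i).take (l+1)) _ ?_ ?_ ?_ ?_ ?_
      · simp
      · simp only [List.length_take, List.length_ofFn]; omega
      · intro j hj
        simp only [List.length_take, List.length_ofFn] at hj
        simp only [List.getElem_take, List.getElem_ofFn]
        exact hadj _ _ _ _ rfl
      · intro j hj
        simp only [List.getElem_take, List.getElem_ofFn]
        exact hq _
      · intro j hj
        simp only [List.getElem_take, List.getElem_ofFn]
        exact h0 _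
    · have hrn' : r < n := lt_of_le_of_ne hrn hr
      have htake : (List.ofFn q).take (l+1) = (List.ofFn q).take l ++ [q ⟨l, hln⟩] := by
        rw [List.take_succ, List.getElem?_eq_getElem (by simp [hln])]
        simp
      have hdrop : (List.ofFn q).drop r = q ⟨r, hrn'⟩ :: (List.ofFn q).drop (r+1) := by
        rw [List.drop_eq_getElem_cons (by simp [hrn'])]
        simp
      by_cases hir : i ⟨l, hln⟩ = i ⟨r, hrn'⟩
      · -- pairing case
        have hprodsplit : ((List.ofFn q).take (l+1) ++ (List.ofFn q).drop r).prod
            = ((List.ofFn q).take l).prod * (q ⟨l, hln⟩ * q ⟨r, hrn'⟩) *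
              ((List.ofFn q).drop (r+1)).prod := by
          rw [htake, hdrop]
          simp [List.prod_append, List.prod_cons, mul_assoc]
        set lam := μ (q ⟨l, hln⟩ * q ⟨r, hrn'⟩) with hlam
        set c := q ⟨l, hln⟩ * q ⟨r, hrn'⟩ - lam • (1 : A) with hcdef
        have hcc : q ⟨l, hln⟩ * q ⟨r, hrn'⟩ = c + lam • 1 := by rw [hcdef]; abel
        have hcm : c ∈ Alg (i ⟨l, hln⟩) := by
          refine sub_mem (mul_mem (hq _) ?_) (Subalgebra.smul_mem _ (one_mem _) _)
          rw [hir]; exact hq _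
        have hc0 : μ c = 0 := by
          rw [hcdef, map_sub, map_smul, hμ1, smul_eq_mul, mul_one, ← hlam, sub_self]
        have expand : ((List.ofFn q).take l).prod * (q ⟨l, hln⟩ * q ⟨r, hrn'⟩) *
              ((List.ofFn q).drop (r+1)).prod
            = ((List.ofFn q).take l ++ c :: (List.ofFn q).drop (r+1)).prod
              + lam • (((List.ofFn q).take l ++ (List.ofFn q).drop (r+1)).prod) := by
          rw [hcc]
          simp only [List.prod_append, List.prod_cons, mul_add, add_mul,
            mul_smul_comm, smul_mul_assoc, mul_one, mul_assoc]
        have first0 : μ (((List.ofFn q).take l ++ c :: (List.ofFn q).drop (r+1)).prod) = 0 := by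
          refine free_list μ Alg F ((List.ofFn i).take l ++ (i ⟨l, hln⟩) :: (List.ofFn i).drop (r+1)) _ ?_ ?_ ?_ ?_ ?_
          · simp
          · simp only [List.length_append, List.length_take, List.length_cons,
              List.length_drop, List.length_ofFn]; omega
          · intro j hj
            simp only [List.length_append, List.length_take, List.length_cons,
              List.length_drop, List.length_ofFn] at hj
            rw [getElem_tcd i l (r+1) (by omega), getElem_tcd i l (r+1) (by omega)]
            rcases Nat.lt_trichotomy (j+1) l with h1 | h1 | h1
            · rw [dif_pos (by omega : j < l), dif_pos h1]
              exact hadj _ _ _ _ rfl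
            · rw [dif_pos (by omega : j < l), dif_neg (by omega : ¬ j + 1 < l), dif_pos h1]
              exact hadj _ _ _ _ (by omega)
            · rcases Nat.lt_trichotomy j l with h2 | h2 | h2
              · exfalso; omega
              · rw [dif_neg (by omega : ¬ j < l), dif_pos h2, dif_neg (by omega : ¬ j + 1 < l),
                  dif_neg (by omega : ¬ j + 1 = l)]
                exact fun hc2 => hi r (by omega)
                  ((hir.symm.trans hc2).trans (congrArg i (Fin.mk_eq_mk.mpr (by omega))))
              · rw [dif_neg (by omega : ¬ j < l), dif_neg (by omega : ¬ j = l),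
                  dif_neg (by omega : ¬ j + 1 < l), dif_neg (by omega : ¬ j + 1 = l)]
                exact hadj _ _ _ _ (by omega)
          · intro j hj
            rw [getElem_tcd q l (r+1) (by omega), getElem_tcd i l (r+1) (by omega)]
            rcases Nat.lt_trichotomy j l with h1 | h1 | h1
            · rw [dif_pos h1, dif_pos h1]; exact hq _
            · rw [dif_neg (by omega : ¬ j < l), dif_neg (by omega : ¬ j < l),
                dif_pos h1, dif_pos h1]
              exact hcm
            · rw [dif_neg (by omega : ¬ j < l), dif_neg (by omega : ¬ j < l),
                dif_neg (by omega : ¬ j = l), dif_neg (by omega : ¬ j = l)]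
              exact hq _
          · intro j hj
            rw [getElem_tcd q l (r+1) (by omega)]
            rcases Nat.lt_trichotomy j l with h1 | h1 | h1
            · rw [dif_pos h1]; exact h0 _
            · rw [dif_neg (by omega : ¬ j < l), dif_pos h1]
              exact hc0
            · rw [dif_neg (by omega : ¬ j < l), dif_neg (by omega : ¬ j = l)]
              exact h0 _
        have second := IH (r+1) (by omega) (by omega)
        rw [hprodsplit, expand, map_add, map_smul, first0, second, zero_add, smul_eq_mul]
        by_cases hcond : l + 1 + r = n ∧ ∀ j (_ : j < l + 1) (hjn : j < n) (hjn' : n - 1 - j < n),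
            i ⟨j, hjn⟩ = i ⟨n - 1 - j, hjn'⟩
        · rw [if_pos hcond,
            if_pos (⟨by omega, fun j hjl hjn hjn' => hcond.2 j (by omega) hjn hjn'⟩ :
              l + (r+1) = n ∧ ∀ j (_ : j < l) (hjn : j < n) (hjn' : n - 1 - j < n),
                i ⟨j, hjn⟩ = i ⟨n - 1 - j, hjn'⟩),
            Finset.prod_range_succ]
          have hGl : pairG μ q l = lam := by
            simp only [pairG]
            rw [dif_pos (show l < n ∧ n - 1 - l < n from ⟨hln, by omega⟩), hlam]
            have e : (⟨n - 1 - l, by omega⟩ : Fin n) = ⟨r, hrn'⟩ := Fin.mk_eq_mk.mpr (by omega)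
            rw [e]
          rw [hGl]
          ring
        · have notC' : ¬(l + (r+1) = n ∧ ∀ j (_ : j < l) (hjn : j < n) (hjn' : n - 1 - j < n),
              i ⟨j, hjn⟩ = i ⟨n - 1 - j, hjn'⟩) := by
            rintro ⟨hs, hsym⟩
            refine hcond ⟨by omega, fun j hjl hjn hjn' => ?_⟩
            rcases Nat.lt_succ_iff_lt_or_eq.mp hjl with h | h
            · exact hsym j h hjn hjn'
            · subst h
              exact hir.trans (congrArg i (Fin.mk_eq_mk.mpr (by omega)))
          rw [if_neg hcond, if_neg notC', mul_zero]
      · -- non-pairing case: word is alternating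
        rw [if_neg (fun hc2 => hir (((hc2).2 l (by omega) hln (by omega)).trans
          (congrArg i (Fin.mk_eq_mk.mpr (by omega)))))]
        refine free_list μ Alg F ((List.ofFn i).take (l+1) ++ (List.ofFn i).drop r) _ ?_ ?_ ?_ ?_ ?_
        · simp
        · simp only [List.length_append, List.length_take, List.length_drop,
            List.length_ofFn]; omega
        · intro j hj
          simp only [List.length_append, List.length_take, List.length_drop,
            List.length_ofFn] at hj
          rw [getElem_td i (l+1) r (by omega), getElem_td i (l+1) r (by omega)]
          rcases Nat.lt_trichotomy (j+1) (l+1) with h1 | h1 | h1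
          · rw [dif_pos (by omega : j < l + 1), dif_pos h1]
            exact hadj _ _ _ _ rfl
          · rw [dif_pos (by omega : j < l + 1), dif_neg (by omega : ¬ j + 1 < l + 1)]
            exact fun hc2 => hir (((congrArg i (Fin.mk_eq_mk.mpr (by omega))).trans hc2).trans
              (congrArg i (Fin.mk_eq_mk.mpr (by omega))))
          · rw [dif_neg (by omega : ¬ j < l + 1), dif_neg (by omega : ¬ j + 1 < l + 1)]
            exact hadj _ _ _ _ (by omega)
        · intro j hj
          rw [getElem_td q (l+1) r (by omega), getElem_td i (l+1) r (by omega)]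
          by_cases h1 : j < l + 1
          · rw [dif_pos h1, dif_pos h1]; exact hq _
          · rw [dif_neg h1, dif_neg h1]; exact hq _
        · intro j hj
          rw [getElem_td q (l+1) r (by omega)]
          by_cases h1 : j < l + 1
          · rw [dif_pos h1]; exact h0 _
          · rw [dif_neg h1]; exact h0 _

open Classical in
lemma mu_erase (μ : A →ₗ[ℂ] ℂ) (hμ1 : μ 1 = 1) (Alg : Fin k → Subalgebra ℂ A)
    (F : FreeSets (⇑μ) (fun i => (Alg i : Set A)))
    {n : ℕ} (i : Fin n → Fin k) (hi : Alternating i) (q : Fin n → A)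
    (hq : ∀ m, q m ∈ Alg (i m)) (h0 : ∀ m, μ (q m) = 0) (m : ℕ) (hm : m < n) :
    μ (((List.ofFn q).eraseIdx m).prod) =
      if (2 * m + 1 = n ∧ ∀ j : Fin n, i j = i j.rev) then
        ∏ j ∈ Finset.range ((n - 1) / 2), pairG μ q j
      else 0 := by
  rw [List.eraseIdx_eq_take_drop_succ,
    key μ hμ1 Alg F i hi q hq h0 m (m+1) (Nat.lt_succ_self m) hm]
  by_cases h2 : 2 * m + 1 = n
  · have hm2 : m = (n - 1) / 2 := by omega
    by_cases hsym : ∀ j : Fin n, i j = i j.rev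
    · have hC1 : m + (m+1) = n ∧ ∀ j (_ : j < m) (hjn : j < n) (hjn' : n - 1 - j < n),
          i ⟨j, hjn⟩ = i ⟨n - 1 - j, hjn'⟩ :=
        ⟨by omega, fun j hjl hjn hjn' =>
          (hsym ⟨j, hjn⟩).trans (congrArg i (Fin.ext (by rw [Fin.val_rev]; simp; omega)))⟩
      rw [if_pos hC1, if_pos ⟨h2, hsym⟩, hm2]
    · have hC1 : ¬(m + (m+1) = n ∧ ∀ j (_ : j < m) (hjn : j < n) (hjn' : n - 1 - j < n),
          i ⟨j, hjn⟩ = i ⟨n - 1 - j, hjn'⟩) := by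
        rintro ⟨hs, hpart⟩
        apply hsym
        intro j
        have hjlt := j.isLt
        have hrv : j.rev = (⟨n - 1 - j.1, by omega⟩ : Fin n) :=
          Fin.ext (by rw [Fin.val_rev]; simp; omega)
        rcases lt_trichotomy j.1 m with h | h | h
        · rw [hrv]; exact hpart j.1 h j.isLt (by omega)
        · rw [hrv]; exact congrArg i (Fin.ext (by simp; omega))
        · rw [hrv]
          have hp := hpart (n - 1 - j.1) (by omega) (by omega) (by omega)
          exact (congrArg i (Fin.ext (by simp; omega))).trans hp.symm
      rw [if_neg hC1, if_neg (by rintro ⟨-, hs⟩; exact hsym hs)]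
  · rw [if_neg (by rintro ⟨hs, -⟩; omega), if_neg (by rintro ⟨hs, -⟩; omega)]

open Classical in
lemma sum_erase (μ μ' : A →ₗ[ℂ] ℂ) (hμ1 : μ 1 = 1) (Alg : Fin k → Subalgebra ℂ A)
    (F : FreeSets (⇑μ) (fun i => (Alg i : Set A)))
    {n : ℕ} (hn : 1 ≤ n) (i : Fin n → Fin k) (hi : Alternating i) (q : Fin n → A)
    (hq : ∀ m, q m ∈ Alg (i m)) (h0 : ∀ m, μ (q m) = 0) :
    ∑ m : Fin n, μ (((List.ofFn q).eraseIdx (m : ℕ)).prod) * μ' (q m) =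
      if (Odd n ∧ ∀ m : Fin n, i m = i m.rev) then
        (∏ j ∈ Finset.range ((n - 1) / 2), pairG μ q j) * μ' (q ⟨n / 2, by omega⟩)
      else 0 := by
  have hterm : ∀ m : Fin n, μ (((List.ofFn q).eraseIdx (m : ℕ)).prod) * μ' (q m)
      = (if (2 * m.1 + 1 = n ∧ ∀ j : Fin n, i j = i j.rev) then
          ∏ j ∈ Finset.range ((n - 1) / 2), pairG μ q j else 0) * μ' (q m) := by
    intro m
    rw [mu_erase μ hμ1 Alg F i hi q hq h0 m.1 m.isLt]
  rw [Finset.sum_congr rfl (fun m _ => hterm m)]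
  by_cases hc : Odd n ∧ ∀ m : Fin n, i m = i m.rev
  · rw [if_pos hc]
    obtain ⟨⟨t, ht⟩, hsym⟩ := hc
    rw [Finset.sum_eq_single (⟨n / 2, by omega⟩ : Fin n)]
    · rw [if_pos ⟨by simp; omega, hsym⟩]
    · intro b _ hb
      rw [if_neg, zero_mul]
      rintro ⟨hb2, -⟩
      exact hb (Fin.ext (by simp; omega))
    · intro habs; exact absurd (Finset.mem_univ _) habs
  · rw [if_neg hc]
    apply Finset.sum_eq_zero
    intro m _
    rw [if_neg, zero_mul]
    rintro ⟨h2, hs⟩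
    exact hc ⟨⟨m.1, by omega⟩, hs⟩


end BS2

/-- Infinitesimal freeness of `A_1, …, A_k` in `(A, μ, μ')` is
equivalent to: `A_1, …, A_k` are free in `(A, μ)` and, for all alternating centered
tuples, `μ'(q_1 ⋯ q_n) = Σ_m μ(q_1 ⋯ q_{m−1} q_{m+1} ⋯ q_n) μ'(q_m)`. -/
theorem infinitesimallyFree_iff_BS_condition
    {A : Type*} [Ring A] [Algebra ℂ A]
    (μ μ' : A →ₗ[ℂ] ℂ) (hμ1 : μ 1 = 1) (hμ'1 : μ' 1 = 0)
    {k : ℕ} (Alg : Fin k → Subalgebra ℂ A) :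
    InfFreeSets (⇑μ) (⇑μ') (fun i => (Alg i : Set A)) ↔
      (FreeSets (⇑μ) (fun i => (Alg i : Set A)) ∧
        ∀ (n : ℕ), 1 ≤ n → ∀ i : Fin n → Fin k, Alternating i →
          ∀ q : Fin n → A, (∀ m, q m ∈ Alg (i m)) → (∀ m, μ (q m) = 0) →
            μ' (List.ofFn q).prod =
              ∑ m : Fin n,
                μ (((List.ofFn q).eraseIdx (m : ℕ)).prod) * μ' (q m)) := by
  classical
  have hpair : ∀ (n : ℕ) (hn : 1 ≤ n) (q : Fin n → A),
      (∏ j : Fin ((n - 1) / 2), μ (q ⟨j, by have := j.isLt; omega⟩ *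
          q ⟨n - 1 - j, by have := j.isLt; omega⟩))
        = ∏ j ∈ Finset.range ((n - 1) / 2), pairG μ q j := by
    intro n hn q
    rw [← Fin.prod_univ_eq_prod_range (fun j => pairG μ q j) ((n - 1) / 2)]
    refine Finset.prod_congr rfl fun j _ => ?_
    have hj := j.isLt
    simp only [pairG]
    rw [dif_pos (show (j : ℕ) < n ∧ n - 1 - (j : ℕ) < n from ⟨by omega, by omega⟩)]
  constructor
  · intro H
    have F : FreeSets (⇑μ) (fun i => ((Alg i : Set A))) :=
      fun n hn i hi a ha h0 => (H n hn i hi a ha h0).1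
    refine ⟨F, ?_⟩
    intro n hn i hi q hq h0
    rw [sum_erase μ μ' hμ1 Alg F hn i hi q hq h0]
    obtain ⟨-, h1, h2⟩ := H n hn i hi q hq h0
    by_cases hc : Odd n ∧ ∀ m : Fin n, i m = i m.rev
    · rw [if_pos hc, h1 hc, hpair n hn q]
    · rw [if_neg hc, h2 hc]
  · rintro ⟨F, B⟩
    intro n hn i hi q hq h0
    refine ⟨F n hn i hi q hq h0, ?_, ?_⟩
    · intro hc
      rw [B n hn i hi q hq h0, sum_erase μ μ' hμ1 Alg F hn i hi q hq h0, if_pos hc,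
        ← hpair n hn q]
    · intro hc
      rw [B n hn i hi q hq h0, sum_erase μ μ' hμ1 Alg F hn i hi q hq h0, if_neg hc]

end InfFree
end
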